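/- Assume n≥2, n>2α, 0<α≤2, c₁,c₂≥0 with c₁+c₂>0, 0<p₁≤1 and 0<p₂≤(n+α)/(n−α), and let u be a positive continuous solution of the Hartree integral equation. Then there exists a constant C>0 (depending on u and the parameters) such that u(y) ≥ C·|y|^{−(n−α)} for all y ∈ ℝⁿ with |y| ≥ 1. -/

import Mathlib

open MeasureTheory Filter Metric Set
open scoped ENNReal NNReal Topology BigOperators Classical

noncomputable section

/-- `n`-dimensional Euclidean space. -/
abbrev Euc (n : ℕ) : Type := EuclideanSpace ℝ (Fin n)

/-- The Laplacian `Δu(x) = ∑ᵢ ∂²u/∂xᵢ²(x)`. -/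
noncomputable def lapl (n : ℕ) (u : Euc n → ℝ) (x : Euc n) : ℝ :=
  ∑ i : Fin n,
    fderiv ℝ (fun y => fderiv ℝ u y (EuclideanSpace.single i (1:ℝ))) x
      (EuclideanSpace.single i (1:ℝ))

/-- The normalization constant `C_{n,α} = (∫ (1 - cos(2πζ₁))/|ζ|^{n+α} dζ)⁻¹`. -/
noncomputable def fracC (n : ℕ) (α : ℝ) : ℝ :=
  (∫ ζ : Euc n,
    (1 - Real.cos (2 * Real.pi * (if h : 0 < n then ζ ⟨0, h⟩ else 0))) /
      ‖ζ‖ ^ ((n : ℝ) + α))⁻¹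

/-- The pointwise fractional Laplacian `(-Δ)^{α/2}` for `0 < α < 2`, defined as a principal
value, and `-Δ` when `α = 2`. -/
noncomputable def fracLap (n : ℕ) (α : ℝ) (u : Euc n → ℝ) (x : Euc n) : ℝ :=
  if α = 2 then - lapl n u x
  else fracC n α *
    limUnder (𝓝[>] (0:ℝ))
      (fun ε : ℝ => ∫ y in {y : Euc n | ε ≤ ‖y - x‖}, (u x - u y) / ‖x - y‖ ^ ((n : ℝ) + α))

/-- Membership in `L_α(ℝⁿ)`: `∫ |u(y)|/(1+|y|^{n+α}) dy < ∞`. -/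
def memLalpha (n : ℕ) (α : ℝ) (u : Euc n → ℝ) : Prop :=
  Integrable (fun y : Euc n => |u y| / (1 + ‖y‖ ^ ((n : ℝ) + α)))

/-- `u` is locally `C^{1,1}` at each point of `Ω`. -/
def C11On (n : ℕ) (u : Euc n → ℝ) (Ω : Set (Euc n)) : Prop :=
  ∀ x ∈ Ω, ∃ ε > 0, DifferentiableOn ℝ u (ball x ε) ∧
    ∃ K : ℝ≥0, LipschitzOnWith K (fderiv ℝ u) (ball x ε)

/-- Regularity required for the pointwise operator on `Ω`:
`C^{1,1}_{loc}(Ω) ∩ L_α(ℝⁿ)` if `0 < α < 2`, and `C²` on `Ω` if `α = 2`. -/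
def regOn (n : ℕ) (α : ℝ) (u : Euc n → ℝ) (Ω : Set (Euc n)) : Prop :=
  (α = 2 → ContDiffOn ℝ 2 u Ω) ∧ (α ≠ 2 → C11On n u Ω ∧ memLalpha n α u)

/-- Right-hand side of the static Schrödinger–Hartree equation with combined nonlinearities. -/
noncomputable def hartreeRHS (n : ℕ) (α c₁ c₂ p₁ p₂ : ℝ) (u : Euc n → ℝ) (x : Euc n) : ℝ :=
  c₁ * (∫ z : Euc n, u z ^ 2 / ‖x - z‖ ^ (2 * α)) * u x ^ p₁ + c₂ * u x ^ p₂

/-- `u` is a classical solution of the static Schrödinger–Hartree equation with combined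
nonlinearities. -/
def isHartreeSol (n : ℕ) (α c₁ c₂ p₁ p₂ : ℝ) (u : Euc n → ℝ) : Prop :=
  regOn n α u Set.univ ∧ ∀ x : Euc n, fracLap n α u x = hartreeRHS n α c₁ c₂ p₁ p₂ u x

/-- Right-hand side of the static Schrödinger–Maxwell equation with combined nonlinearities. -/
noncomputable def maxwellRHS (n : ℕ) (α c₁ c₂ q₁ q₂ : ℝ) (u : Euc n → ℝ) (x : Euc n) : ℝ :=
  c₁ * (∫ z : Euc n, u z ^ (((n:ℝ) + α) / ((n:ℝ) - α)) / ‖x - z‖ ^ ((n:ℝ) - α)) * u x ^ q₁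
    + c₂ * u x ^ q₂

/-- `u` is a classical solution of the static Schrödinger–Maxwell equation with combined
nonlinearities. -/
def isMaxwellSol (n : ℕ) (α c₁ c₂ q₁ q₂ : ℝ) (u : Euc n → ℝ) : Prop :=
  regOn n α u Set.univ ∧ ∀ x : Euc n, fracLap n α u x = maxwellRHS n α c₁ c₂ q₁ q₂ u x

/-- The Riesz potential constant `R_{α,n} = Γ((n-α)/2)/(π^{n/2} 2^α Γ(α/2))`. -/
noncomputable def Rconst (n : ℕ) (α : ℝ) : ℝ :=
  Real.Gamma (((n:ℝ) - α) / 2) / (Real.pi ^ ((n:ℝ) / 2) * (2:ℝ) ^ α * Real.Gamma (α / 2))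

/-- The Hartree integral equation. -/
def hartreeIE (n : ℕ) (α c₁ c₂ p₁ p₂ : ℝ) (u : Euc n → ℝ) : Prop :=
  ∀ y : Euc n, u y =
    (∫ z : Euc n, c₁ * Rconst n α / ‖y - z‖ ^ ((n:ℝ) - α)
      * (∫ ξ : Euc n, u ξ ^ 2 / ‖z - ξ‖ ^ (2 * α)) * u z ^ p₁)
    + ∫ z : Euc n, c₂ * Rconst n α / ‖y - z‖ ^ ((n:ℝ) - α) * u z ^ p₂

/-- The Maxwell integral equation. -/
def maxwellIE (n : ℕ) (α c₁ c₂ q₁ q₂ : ℝ) (u : Euc n → ℝ) : Prop :=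
  ∀ y : Euc n, u y =
    (∫ z : Euc n, c₁ * Rconst n α / ‖y - z‖ ^ ((n:ℝ) - α)
      * (∫ ξ : Euc n, u ξ ^ (((n:ℝ) + α) / ((n:ℝ) - α)) / ‖z - ξ‖ ^ ((n:ℝ) - α)) * u z ^ q₁)
    + ∫ z : Euc n, c₂ * Rconst n α / ‖y - z‖ ^ ((n:ℝ) - α) * u z ^ q₂

/-- The Kelvin-type transform `u_{x,λ}(y) = (λ/|y-x|)^{n-α} u(x + λ²(y-x)/|y-x|²)`. -/
noncomputable def kelvin (n : ℕ) (α : ℝ) (u : Euc n → ℝ) (x : Euc n) (lam : ℝ)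
    (y : Euc n) : ℝ :=
  (lam / ‖y - x‖) ^ ((n:ℝ) - α) * u (x + (lam ^ 2 / ‖y - x‖ ^ 2) • (y - x))

/-- `ω_{x,λ} = u_{x,λ} - u`. -/
noncomputable def omegaK (n : ℕ) (α : ℝ) (u : Euc n → ℝ) (x : Euc n) (lam : ℝ)
    (y : Euc n) : ℝ :=
  kelvin n α u x lam y - u y

/-- `B_λ⁻ = {y ∈ B_λ(x)\{x} : ω_{x,λ}(y) < 0}`. -/
def Bminus (n : ℕ) (α : ℝ) (u : Euc n → ℝ) (x : Euc n) (lam : ℝ) : Set (Euc n) :=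
  {y ∈ ball x lam \ {x} | omegaK n α u x lam y < 0}

/-- The moving-spheres radius
`λ̄(x) = sup {λ > 0 : u_{x,μ} ≥ u in B_μ(x)\{x} for all 0 < μ ≤ λ} ∈ (0, +∞]`. -/
noncomputable def lambdaBar (n : ℕ) (α : ℝ) (u : Euc n → ℝ) (x : Euc n) : ℝ≥0∞ :=
  ⨆ lam ∈ {l : ℝ | 0 < l ∧ ∀ μ : ℝ, 0 < μ → μ ≤ l →
      ∀ y ∈ ball x μ \ {x}, u y ≤ kelvin n α u x μ y}, ENNReal.ofReal lam

/-- The standard bubble profile `x ↦ C (μ/(1+μ²|x-x₀|²))^{(n-α)/2}`. -/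
noncomputable def stdBubble (n : ℕ) (α C μ : ℝ) (x₀ x : Euc n) : ℝ :=
  C * (μ / (1 + μ ^ 2 * ‖x - x₀‖ ^ 2)) ^ (((n:ℝ) - α) / 2)

/-- `P(y) = ∫ u(z)²/|y-z|^{2α} dz`. -/
noncomputable def Pfun (n : ℕ) (α : ℝ) (u : Euc n → ℝ) (y : Euc n) : ℝ :=
  ∫ z : Euc n, u z ^ 2 / ‖y - z‖ ^ (2 * α)

/-- `𝓛(y) = c₁p₁P(y)u(y)^{p₁-1} + c₂p₂u(y)^{p₂-1}`. -/
noncomputable def Lfun (n : ℕ) (α c₁ c₂ p₁ p₂ : ℝ) (u : Euc n → ℝ) (y : Euc n) : ℝ :=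
  c₁ * p₁ * Pfun n α u y * u y ^ (p₁ - 1) + c₂ * p₂ * u y ^ (p₂ - 1)

/-- `Q(y) = ∫ u(z)^{(n+α)/(n-α)}/|y-z|^{n-α} dz`. -/
noncomputable def Qfun (n : ℕ) (α : ℝ) (u : Euc n → ℝ) (y : Euc n) : ℝ :=
  ∫ z : Euc n, u z ^ (((n:ℝ) + α) / ((n:ℝ) - α)) / ‖y - z‖ ^ ((n:ℝ) - α)

/-- `𝓛̃(y) = c₁q₁Q(y)u(y)^{q₁-1} + c₂q₂u(y)^{q₂-1}`. -/
noncomputable def Ltilfun (n : ℕ) (α c₁ c₂ q₁ q₂ : ℝ) (u : Euc n → ℝ) (y : Euc n) : ℝ :=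
  c₁ * q₁ * Qfun n α u y * u y ^ (q₁ - 1) + c₂ * q₂ * u y ^ (q₂ - 1)

/-- `(u,v)` is a pair of nonnegative classical solutions of the Schrödinger–Maxwell system. -/
def isMaxwellSystemSol (n : ℕ) (α c₁ c₂ q₁ q₂ : ℝ) (u v : Euc n → ℝ) : Prop :=
  regOn n α u Set.univ ∧ regOn n α v Set.univ ∧
  (∀ x, 0 ≤ u x) ∧ (∀ x, 0 ≤ v x) ∧
  (∀ x : Euc n, fracLap n α u x = v x * u x ^ q₁ + c₂ * u x ^ q₂) ∧
  (∀ x : Euc n, fracLap n α v x = c₁ * (Rconst n α)⁻¹ * u x ^ (((n:ℝ) + α) / ((n:ℝ) - α)))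

/-- Hypotheses of the narrow region principle, Hartree case: `Ω` lies in the annulus
`A_{λ,l}(x)`, `ω_{x,λ}` has the required regularity on `Ω`, the differential inequality (a)
holds on `Ω ∩ B_λ⁻`, and conditions (b), (c) on the negative minimum hold. -/
def narrowHypH (n : ℕ) (α c₁ c₂ p₁ p₂ : ℝ) (u : Euc n → ℝ) (x : Euc n) (lam l : ℝ)
    (Ω : Set (Euc n)) : Prop :=
  0 < l ∧ l < lam ∧ Ω ⊆ {y : Euc n | lam - l < ‖y - x‖ ∧ ‖y - x‖ < lam} ∧
  regOn n α (omegaK n α u x lam) Ω ∧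
  (∀ y ∈ Ω ∩ Bminus n α u x lam,
    0 ≤ fracLap n α (omegaK n α u x lam) y
      - Lfun n α c₁ c₂ p₁ p₂ u y * omegaK n α u x lam y
      - 2 * c₁ * (∫ z in Bminus n α u x lam,
          u z * omegaK n α u x lam z / ‖y - z‖ ^ (2 * α)) * u y ^ p₁) ∧
  ((Bminus n α u x lam).Nonempty → ∃ y₀ ∈ ball x lam \ {x},
      omegaK n α u x lam y₀ < 0 ∧
      ∀ y ∈ ball x lam \ {x}, omegaK n α u x lam y₀ ≤ omegaK n α u x lam y) ∧
  (∀ y₀ ∈ (ball x lam \ {x}) \ Ω,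
      ¬ (omegaK n α u x lam y₀ < 0 ∧
        ∀ y ∈ ball x lam \ {x}, omegaK n α u x lam y₀ ≤ omegaK n α u x lam y))

/-- Hypotheses of the narrow region principle, Maxwell case. -/
def narrowHypM (n : ℕ) (α c₁ c₂ q₁ q₂ : ℝ) (u : Euc n → ℝ) (x : Euc n) (lam l : ℝ)
    (Ω : Set (Euc n)) : Prop :=
  0 < l ∧ l < lam ∧ Ω ⊆ {y : Euc n | lam - l < ‖y - x‖ ∧ ‖y - x‖ < lam} ∧
  regOn n α (omegaK n α u x lam) Ω ∧
  (∀ y ∈ Ω ∩ Bminus n α u x lam,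
    0 ≤ fracLap n α (omegaK n α u x lam) y
      - Ltilfun n α c₁ c₂ q₁ q₂ u y * omegaK n α u x lam y
      - c₁ * (((n:ℝ) + α) / ((n:ℝ) - α))
        * (∫ z in Bminus n α u x lam,
            u z ^ (2 * α / ((n:ℝ) - α)) * omegaK n α u x lam z / ‖y - z‖ ^ ((n:ℝ) - α))
        * u y ^ q₁) ∧
  ((Bminus n α u x lam).Nonempty → ∃ y₀ ∈ ball x lam \ {x},
      omegaK n α u x lam y₀ < 0 ∧
      ∀ y ∈ ball x lam \ {x}, omegaK n α u x lam y₀ ≤ omegaK n α u x lam y) ∧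
  (∀ y₀ ∈ (ball x lam \ {x}) \ Ω,
      ¬ (omegaK n α u x lam y₀ < 0 ∧
        ∀ y ∈ ball x lam \ {x}, omegaK n α u x lam y₀ ≤ omegaK n α u x lam y))

/-! Both terms of the integral equation are Riesz potentials `y ↦ ∫ a |y - z|^{-s} g(z) dz` of
nonnegative densities `g`. If `|z| < R` and `|y| ≥ 1` then `|y - z| ≤ (1 + R)|y|`, so such a
potential is at least `a ((1 + R)|y|)^{-s} ∫_{B_R} g`, and `g` has positive mass in some ball `B_R`
as soon as the potential is positive at a single point. Since `u > 0`, at every `y` at least one of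
the two potentials is positive. -/

lemma norm_sub_le_mul_norm_of_mem_ball {E : Type*} [NormedAddCommGroup E] {y z : E} {R : ℝ}
    (hy : 1 ≤ ‖y‖) (hz : z ∈ ball (0 : E) R) : ‖y - z‖ ≤ (1 + R) * ‖y‖ := by
  have hzR := mem_ball_zero_iff.mp hz
  have := mul_le_mul_of_nonneg_left hy ((norm_nonneg z).trans hzR.le)
  linarith [norm_sub_le y z]

section RieszPotential

variable {E : Type*} [NormedAddCommGroup E] [MeasurableSpace E]
  {μ : Measure E} {a s : ℝ} {g : E → ℝ}

def rieszPotential (μ : Measure E) (a s : ℝ) (g : E → ℝ) (y : E) : ℝ :=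
  ∫ z, a / ‖y - z‖ ^ s * g z ∂μ

lemma rieszPotential_nonneg (ha : 0 ≤ a) (hg : 0 ≤ g) (y : E) :
    0 ≤ rieszPotential μ a s g y :=
  integral_nonneg fun z => mul_nonneg (by positivity) (hg z)

variable [OpensMeasurableSpace E]

lemma exists_setIntegral_ball_pos {f : E → ℝ} (hf : Integrable f μ) (hpos : 0 < ∫ z, f z ∂μ) :
    ∃ k : ℕ, 0 < ∫ z in ball (0 : E) k, f z ∂μ := by
  have hlim : Tendsto (fun k : ℕ => ∫ z in ball (0 : E) k, f z ∂μ) atTop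
      (𝓝 (∫ z, f z ∂μ)) := by
    simpa only [iUnion_ball_nat, Measure.restrict_univ] using
      tendsto_setIntegral_of_monotone (s := fun k : ℕ => ball (0 : E) k)
        (fun _ => measurableSet_ball) (fun _ _ hij => ball_subset_ball (by exact_mod_cast hij))
        hf.integrableOn
  exact (hlim.eventually (lt_mem_nhds hpos)).exists

variable [NullSingletonClass μ]

lemma mul_setIntegral_ball_le_rieszPotential (ha : 0 ≤ a) (hs : 0 ≤ s) (hg : 0 ≤ g) {R : ℝ}
    (hR : 0 ≤ R) {y : E} (hy : 1 ≤ ‖y‖) (hint : Integrable (fun z => a / ‖y - z‖ ^ s * g z) μ) :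
    a / (1 + R) ^ s * (∫ z in ball (0 : E) R, g z ∂μ) * ‖y‖ ^ (-s) ≤ rieszPotential μ a s g y := by
  have hy0 : 0 < ‖y‖ := one_pos.trans_le hy
  have hconst : a / (1 + R) ^ s * ‖y‖ ^ (-s) = a / ((1 + R) * ‖y‖) ^ s := by
    rw [Real.rpow_neg hy0.le, Real.mul_rpow (by positivity) hy0.le]
    field_simp
  have hkernel : ∀ᵐ z ∂μ.restrict (ball 0 R),
      a / ((1 + R) * ‖y‖) ^ s * g z ≤ a / ‖y - z‖ ^ s * g z := by
    filter_upwards [ae_restrict_mem measurableSet_ball, ae_restrict_of_ae (μ.ae_ne y)]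
      with z hz hzy
    have h0 : 0 < ‖y - z‖ := norm_sub_pos_iff.mpr hzy.symm
    gcongr
    · exact hg z
    · exact norm_sub_le_mul_norm_of_mem_ball hy hz
  calc a / (1 + R) ^ s * (∫ z in ball (0 : E) R, g z ∂μ) * ‖y‖ ^ (-s)
      = ∫ z in ball (0 : E) R, a / ((1 + R) * ‖y‖) ^ s * g z ∂μ := by
        rw [integral_const_mul, ← hconst]
        ring
    _ ≤ ∫ z in ball (0 : E) R, a / ‖y - z‖ ^ s * g z ∂μ :=
        integral_mono_of_nonneg (ae_of_all _ fun z => mul_nonneg (by positivity) (hg z))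
          hint.integrableOn hkernel
    _ ≤ rieszPotential μ a s g y :=
        setIntegral_le_integral hint (ae_of_all _ fun z => mul_nonneg (by positivity) (hg z))

lemma integrableOn_ball_of_integrable_rieszKernel_mul (ha : 0 < a) (hs : 0 ≤ s) {y₀ : E}
    (hint : Integrable (fun z => a / ‖y₀ - z‖ ^ s * g z) μ) (R : ℝ) :
    IntegrableOn g (ball (0 : E) R) μ := by
  have hcont : Continuous fun z : E => ‖y₀ - z‖ ^ s / a :=
    ((continuous_const.sub continuous_id).norm.rpow_const fun _ => Or.inr hs).div_const a
  have hbound : ∀ᵐ z ∂μ.restrict (ball 0 R), ‖‖y₀ - z‖ ^ s / a‖ ≤ (‖y₀‖ + R) ^ s / a := by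
    filter_upwards [ae_restrict_mem measurableSet_ball] with z hz
    rw [Real.norm_of_nonneg (by positivity)]
    gcongr
    linarith [norm_sub_le y₀ z, mem_ball_zero_iff.mp hz]
  refine (hint.integrableOn.bdd_mul hcont.aestronglyMeasurable hbound).congr ?_
  filter_upwards [ae_restrict_of_ae (μ.ae_ne y₀)] with z hz
  have : ‖y₀ - z‖ ^ s ≠ 0 := (Real.rpow_pos_of_pos (norm_sub_pos_iff.mpr hz.symm) s).ne'
  field_simp

/-- The hypothesis `0 < rieszPotential μ a s g y` is where integrability enters: a non-integrable
integrand has the junk integral `0`. -/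
lemma exists_rieszPotential_lower_bound (ha : 0 ≤ a) (hs : 0 ≤ s) (hg : 0 ≤ g) :
    ∃ C > 0, ∀ y : E, 1 ≤ ‖y‖ → 0 < rieszPotential μ a s g y →
      C * ‖y‖ ^ (-s) ≤ rieszPotential μ a s g y := by
  by_cases hex : ∃ y₀, 0 < rieszPotential μ a s g y₀
  swap
  · exact ⟨1, one_pos, fun y _ hy => (hex ⟨y, hy⟩).elim⟩
  obtain ⟨y₀, hy₀⟩ := hex
  have hint : ∀ {y}, 0 < rieszPotential μ a s g y →
      Integrable (fun z => a / ‖y - z‖ ^ s * g z) μ :=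
    fun hy => Integrable.of_integral_ne_zero hy.ne'
  have ha' : 0 < a := ha.lt_of_ne <| by
    rintro rfl
    simp [rieszPotential] at hy₀
  obtain ⟨k, hk⟩ := exists_setIntegral_ball_pos (hint hy₀) hy₀
  have hmass : 0 < ∫ z in ball (0 : E) k, g z ∂μ := by
    rw [setIntegral_pos_iff_support_of_nonneg_ae (ae_of_all _ hg)
      (integrableOn_ball_of_integrable_rieszKernel_mul ha' hs (hint hy₀) k)]
    rw [setIntegral_pos_iff_support_of_nonneg_ae
      (ae_of_all _ fun z => mul_nonneg (by positivity) (hg z)) (hint hy₀).integrableOn] at hk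
    exact hk.trans_le <| measure_mono <|
      inter_subset_inter_left _ (Function.support_mul_subset_right _ _)
  exact ⟨a / (1 + k) ^ s * ∫ z in ball (0 : E) k, g z ∂μ, by positivity, fun y hy hIy =>
    mul_setIntegral_ball_le_rieszPotential ha hs hg k.cast_nonneg hy (hint hIy)⟩

end RieszPotential

lemma Rconst_pos {n : ℕ} {α : ℝ} (hα : 0 < α) (hαn : α < n) : 0 < Rconst n α := by
  have h₁ := Real.Gamma_pos_of_pos (show 0 < ((n : ℝ) - α) / 2 by linarith)
  have h₂ := Real.Gamma_pos_of_pos (show 0 < α / 2 by linarith)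
  unfold Rconst
  positivity

lemma min_mul_le_add_of_pos_imp {x₁ x₂ C₁ C₂ w : ℝ} (hw : 0 ≤ w) (hx₁ : 0 ≤ x₁) (hx₂ : 0 ≤ x₂)
    (hpos : 0 < x₁ + x₂) (h₁ : 0 < x₁ → C₁ * w ≤ x₁) (h₂ : 0 < x₂ → C₂ * w ≤ x₂) :
    min C₁ C₂ * w ≤ x₁ + x₂ := by
  have hm₁ : min C₁ C₂ * w ≤ C₁ * w := mul_le_mul_of_nonneg_right (min_le_left _ _) hw
  have hm₂ : min C₁ C₂ * w ≤ C₂ * w := mul_le_mul_of_nonneg_right (min_le_right _ _) hw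
  rcases hx₁.eq_or_lt with rfl | hx₁
  · linarith [h₂ (by linarith)]
  · linarith [h₁ hx₁]

theorem hartree_lower_bound_general (n : ℕ) (α c₁ c₂ p₁ p₂ : ℝ) (u : Euc n → ℝ)
    (hn : 2 ≤ n) (hnα : 2 * α < (n:ℝ)) (hα0 : 0 < α)
    (hc₁ : 0 ≤ c₁) (hc₂ : 0 ≤ c₂)
    (hupos : ∀ x, 0 < u x)
    (hIE : hartreeIE n α c₁ c₂ p₁ p₂ u) :
    ∃ C > (0:ℝ), ∀ y : Euc n, 1 ≤ ‖y‖ → C * ‖y‖ ^ (-((n:ℝ) - α)) ≤ u y := by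
  have : Nonempty (Fin n) := Fin.pos_iff_nonempty.mp (by omega)
  have hs : 0 ≤ (n : ℝ) - α := by linarith
  have ha₁ := mul_nonneg hc₁ (Rconst_pos hα0 (by linarith)).le
  have ha₂ := mul_nonneg hc₂ (Rconst_pos hα0 (by linarith)).le
  set g₁ : Euc n → ℝ := fun z => (∫ ξ, u ξ ^ 2 / ‖z - ξ‖ ^ (2 * α)) * u z ^ p₁
  set g₂ : Euc n → ℝ := fun z => u z ^ p₂
  have hg₁ : 0 ≤ g₁ := fun z =>
    mul_nonneg (integral_nonneg fun ξ => by positivity) (Real.rpow_nonneg (hupos z).le _)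
  have hg₂ : 0 ≤ g₂ := fun z => Real.rpow_nonneg (hupos z).le _
  have hu : ∀ y, u y = rieszPotential volume (c₁ * Rconst n α) ((n : ℝ) - α) g₁ y
      + rieszPotential volume (c₂ * Rconst n α) ((n : ℝ) - α) g₂ y := fun y => by
    rw [hIE y]
    simp only [g₁, g₂, rieszPotential, mul_assoc]
  obtain ⟨C₁, hC₁, hI₁⟩ := exists_rieszPotential_lower_bound (μ := volume) ha₁ hs hg₁
  obtain ⟨C₂, hC₂, hI₂⟩ := exists_rieszPotential_lower_bound (μ := volume) ha₂ hs hg₂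
  refine ⟨min C₁ C₂, lt_min hC₁ hC₂, fun y hy => ?_⟩
  rw [hu y]
  exact min_mul_le_add_of_pos_imp (by positivity) (rieszPotential_nonneg ha₁ hg₁ y)
    (rieszPotential_nonneg ha₂ hg₂ y) (hu y ▸ hupos y) (hI₁ y hy) (hI₂ y hy)

/-- lower bound `u(y) ≥ C|y|^{-(n-α)}` for `|y| ≥ 1`, for positive
continuous solutions of the Hartree integral equation. -/
theorem hartree_lower_bound (n : ℕ) (α c₁ c₂ p₁ p₂ : ℝ) (u : Euc n → ℝ)
    (hn : 2 ≤ n) (hnα : 2 * α < (n:ℝ)) (hα0 : 0 < α) (hα2 : α ≤ 2)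
    (hc₁ : 0 ≤ c₁) (hc₂ : 0 ≤ c₂) (hc : 0 < c₁ + c₂)
    (hp₁0 : 0 < p₁) (hp₁1 : p₁ ≤ 1)
    (hp₂0 : 0 < p₂) (hp₂ : p₂ ≤ ((n:ℝ) + α) / ((n:ℝ) - α))
    (hupos : ∀ x, 0 < u x) (hcont : Continuous u)
    (hIE : hartreeIE n α c₁ c₂ p₁ p₂ u) :
    ∃ C > (0:ℝ), ∀ y : Euc n, 1 ≤ ‖y‖ → C * ‖y‖ ^ (-((n:ℝ) - α)) ≤ u y :=
  hartree_lower_bound_general n α c₁ c₂ p₁ p₂ u hn hnα hα0 hc₁ hc₂ hupos hIE
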